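/- arXiv:0901.4683 — 4 statements merged into one kernel-verified Lean document; each statement's English description precedes it below -/
import Mathlib

section
/- Fix a positive integer m, and define a_n = ⌊n·φ_m⌋ and b_n = ⌊n·(φ_m + m)⌋ where φ_m = (2 - m + √(m²+4))/2. Then for every nonnegative integer n, either (a_{n+1} - a_n = 1 and b_{n+1} - b_n = m + 1) or (a_{n+1} - a_n = 2 and b_{n+1} - b_n = m + 2). -/
/-! Since `1 ≤ φ ≤ 2`, consecutive terms of `⌊n φ⌋` differ by `1` or `2`; and because `m` is an
integer, `b n = a n + n m`, so the gaps of `b` are those of `a` shifted by `m`. -/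

lemma floor_add_sub_floor_eq_one_or_two {x c : ℝ} (h1 : 1 ≤ c) (h2 : c ≤ 2) :
    ⌊x + c⌋ - ⌊x⌋ = 1 ∨ ⌊x + c⌋ - ⌊x⌋ = 2 := by
  have lower : ⌊x⌋ + 1 ≤ ⌊x + c⌋ := by
    rw [← Int.floor_add_one]; exact Int.floor_le_floor (by linarith)
  have upper : ⌊x + c⌋ ≤ ⌊x⌋ + 2 := by
    rw [← Int.floor_add_ofNat]; exact Int.floor_le_floor (by linarith)
  omega

lemma le_sqrt_sq_add_four (t : ℝ) : t ≤ √(t ^ 2 + 4) :=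
  Real.le_sqrt_of_sq_le (by linarith)

lemma sqrt_sq_add_four_le {t : ℝ} (ht : 0 ≤ t) : √(t ^ 2 + 4) ≤ t + 2 :=
  Real.sqrt_le_iff.mpr ⟨by linarith, by nlinarith⟩

lemma floor_mul_add_natCast (n m : ℕ) (φ : ℝ) : ⌊(n : ℝ) * (φ + m)⌋ = ⌊(n : ℝ) * φ⌋ + n * m := by
  rw [mul_add]
  exact_mod_cast Int.floor_add_natCast _ (n * m)

theorem stmt_5_general (m : ℕ)
    (φ : ℝ) (hφ : φ = (2 - (m : ℝ) + Real.sqrt ((m : ℝ)^2 + 4)) / 2)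
    (a b : ℕ → ℤ)
    (ha : ∀ n : ℕ, a n = ⌊(n : ℝ) * φ⌋)
    (hb : ∀ n : ℕ, b n = ⌊(n : ℝ) * (φ + m)⌋) :
    ∀ n : ℕ, (a (n + 1) - a n = 1 ∧ b (n + 1) - b n = m + 1) ∨
      (a (n + 1) - a n = 2 ∧ b (n + 1) - b n = m + 2) := by
  intro n
  have hφ1 : 1 ≤ φ := by rw [hφ]; linarith [le_sqrt_sq_add_four (m : ℝ)]
  have hφ2 : φ ≤ 2 := by rw [hφ]; linarith [sqrt_sq_add_four_le (Nat.cast_nonneg (α := ℝ) m)]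
  have ha_gap : a (n + 1) - a n = 1 ∨ a (n + 1) - a n = 2 := by
    rw [ha, ha, Nat.cast_succ, add_one_mul]
    exact floor_add_sub_floor_eq_one_or_two hφ1 hφ2
  have hb_gap : b (n + 1) - b n = a (n + 1) - a n + m := by
    rw [hb, hb, ha, ha, floor_mul_add_natCast, floor_mul_add_natCast]
    push_cast
    ring
  omega

theorem stmt_5 (m : ℕ) (hm : 1 ≤ m)
    (φ : ℝ) (hφ : φ = (2 - (m : ℝ) + Real.sqrt ((m : ℝ)^2 + 4)) / 2)
    (a b : ℕ → ℤ)
    (ha : ∀ n : ℕ, a n = ⌊(n : ℝ) * φ⌋)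
    (hb : ∀ n : ℕ, b n = ⌊(n : ℝ) * (φ + m)⌋) :
    ∀ n : ℕ, (a (n + 1) - a n = 1 ∧ b (n + 1) - b n = m + 1) ∨
      (a (n + 1) - a n = 2 ∧ b (n + 1) - b n = m + 2) :=
  stmt_5_general m φ hφ a b ha hb
end

section
/- Fix positive integers m and p. Suppose (x_n)_{n≥0} and (y_n)_{n≥0} are non-decreasing sequences of nonnegative integers such that (x_n)_{n≥0} and (y_n)_{n≥1} are p-complementary (every nonnegative integer occurs exactly p times in total among them) and y_n - x_n = m·n for all n. Then x_n = ⌊n·φ_{mp}/p⌋ and y_n = ⌊n·(φ_{mp} + mp)/p⌋ for all n, where φ_{mp} = (2 - mp + √((mp)²+4))/2. In particular such a pair of sequences is unique. -/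
/-!
Counting the values `≤ t` turns `p`-complementarity of `x` and `y = x + m n` into the identity
`#{n | x n ≤ t} + #{n ≥ 1 | x n + m n ≤ t} = p (t + 1)` for every `t`, once the sublevel sets of
`x` are known to be finite; they are, because a bounded `x` would leave `y` alone to cover a whole
half-line of values. For `n ≥ 1` the condition `x n + m n ≤ t` only involves the sublevel set of
`x` at `t - m n < t`, so the identity determines all sublevel sets of `x` recursively, hence `x`.
Finally the Beatty-type pair `⌊n φ / p⌋`, `⌊n (φ + m p) / p⌋` satisfies the same identity: `φ` is
irrational and `φ (φ + m p) = φ + (φ + m p)`, i.e. `p / φ + p / (φ + m p) = p`.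
-/

open Set

theorem Nat.isLowerSet_eq_of_ncard_eq {s s' : Set ℕ} (hs : s.Finite) (hs' : s'.Finite)
    (hl : IsLowerSet s) (hl' : IsLowerSet s') (h : s.ncard = s'.ncard) : s = s' := by
  have eq_Iio : ∀ {u : Set ℕ}, u.Finite → IsLowerSet u → u = Iio u.ncard := fun hu hl => by
    obtain h | ⟨a, rfl⟩ := hl.eq_univ_or_Iio
    · exact absurd (h ▸ hu) infinite_univ
    · rw [ncard_Iio_nat]
  rw [eq_Iio hs hl, eq_Iio hs' hl', h]

theorem Nat.ceil_add_ceil_eq_of_irrational {c c' : ℝ} {N : ℕ} (hc : Irrational c) (hc0 : 0 ≤ c)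
    (hc'0 : 0 ≤ c') (h : c + c' = N) : ⌈c⌉₊ + ⌈c'⌉₊ = N + 1 := by
  have hc' : Irrational c' := by
    rw [show c' = N - c by linarith]
    exact hc.natCast_sub N
  have ceil_bounds : ∀ {d : ℝ}, Irrational d → 0 ≤ d → d < ⌈d⌉₊ ∧ (⌈d⌉₊ : ℝ) < d + 1 :=
    fun hd hd0 => ⟨(Nat.le_ceil _).lt_of_ne (hd.ne_nat _), Nat.ceil_lt_add_one hd0⟩
  obtain ⟨h1, h2⟩ := ceil_bounds hc hc0
  obtain ⟨h1', h2'⟩ := ceil_bounds hc' hc'0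
  have lower : N < ⌈c⌉₊ + ⌈c'⌉₊ := by exact_mod_cast (by linarith : (N : ℝ) < ⌈c⌉₊ + ⌈c'⌉₊)
  have upper : ⌈c⌉₊ + ⌈c'⌉₊ < N + 2 := by
    exact_mod_cast (by linarith : (⌈c⌉₊ + ⌈c'⌉₊ : ℝ) < N + 2)
  omega

theorem setOf_floor_mul_le_eq_Iio {α : ℝ} (hα : 0 < α) (t : ℕ) :
    {n : ℕ | ⌊n * α⌋ ≤ t} = Iio ⌈(t + 1) / α⌉₊ := by
  ext n
  rw [mem_ofPred_eq, mem_Iio, Nat.lt_ceil, lt_div_iff₀ hα, ← Int.lt_add_one_iff, Int.floor_lt]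
  push_cast
  rfl

theorem ncard_floor_mul_le_add_ncard_floor_mul_le {α β : ℝ} {p : ℕ} (hα : 0 < α) (hβ : 0 < β)
    (hα_irr : Irrational α) (hαβ : α⁻¹ + β⁻¹ = p) (t : ℕ) :
    {n : ℕ | ⌊n * α⌋ ≤ t}.ncard + {n : ℕ | 1 ≤ n ∧ ⌊n * β⌋ ≤ t}.ncard = p * (t + 1) := by
  have hsum : (t + 1) / α + (t + 1) / β = ((p * (t + 1) : ℕ) : ℝ) := by
    push_cast
    rw [div_eq_mul_inv, div_eq_mul_inv, ← mul_add, hαβ, mul_comm]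
  have hirr : Irrational ((t + 1) / α) := by
    simpa using hα_irr.natCast_div (m := t + 1) (by omega)
  have hceil := Nat.ceil_add_ceil_eq_of_irrational hirr (by positivity) (by positivity) hsum
  have hpos : 0 < ⌈(t + 1) / β⌉₊ := Nat.ceil_pos.mpr (by positivity)
  have hIco : {n : ℕ | 1 ≤ n ∧ ⌊n * β⌋ ≤ t} = Ico 1 ⌈(t + 1) / β⌉₊ := by
    ext n
    rw [mem_Ico, ← mem_Iio, ← setOf_floor_mul_le_eq_Iio hβ]
    rfl
  rw [setOf_floor_mul_le_eq_Iio hα, hIco, ncard_Iio_nat, ncard_Ico_nat]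
  omega

/-- `x` and `(y n)_{n ≥ 1}` are `p`-complementary. Since `ncard` is `0` on infinite sets, this
does not by itself force the fibres to be finite. -/
def Complementary (p : ℕ) (x y : ℕ → ℤ) : Prop :=
  ∀ k : ℕ, {n | x n = k}.ncard + {n | 1 ≤ n ∧ y n = k}.ncard = p

theorem ncard_le_add_ncard_le_of_complementary {x y : ℕ → ℤ} {p : ℕ} (hx0 : ∀ n, 0 ≤ x n)
    (hxy : ∀ n, x n ≤ y n) (hfin : ∀ t : ℕ, {n | x n ≤ t}.Finite)
    (hcomp : Complementary p x y) (t : ℕ) :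
    {n | x n ≤ t}.ncard + {n | 1 ≤ n ∧ y n ≤ t}.ncard = p * (t + 1) := by
  induction t with
  | zero =>
    have hx : {n | x n ≤ (0 : ℕ)} = {n | x n = (0 : ℕ)} := by
      ext n; simp [le_antisymm_iff, hx0 n]
    have hy : {n | 1 ≤ n ∧ y n ≤ (0 : ℕ)} = {n | 1 ≤ n ∧ y n = (0 : ℕ)} := by
      ext n; simp [le_antisymm_iff, (hx0 n).trans (hxy n)]
    rw [hx, hy, hcomp 0, zero_add, mul_one]
  | succ t ih =>
    have hyfin : {n | 1 ≤ n ∧ y n ≤ t}.Finite :=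
      (hfin t).subset fun n hn => (hxy n).trans hn.2
    have hx : {n | x n ≤ (t + 1 : ℕ)} = {n | x n ≤ t} ∪ {n | x n = (t + 1 : ℕ)} := by
      ext n; simp only [mem_union, mem_ofPred_eq]; omega
    have hy : {n | 1 ≤ n ∧ y n ≤ (t + 1 : ℕ)}
        = {n | 1 ≤ n ∧ y n ≤ t} ∪ {n | 1 ≤ n ∧ y n = (t + 1 : ℕ)} := by
      ext n; simp only [mem_union, mem_ofPred_eq]; omega
    have hxdisj : Disjoint {n | x n ≤ t} {n | x n = (t + 1 : ℕ)} :=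
      disjoint_left.mpr fun n h1 h2 => by simp only [mem_ofPred_eq] at h1 h2; omega
    have hydisj : Disjoint {n | 1 ≤ n ∧ y n ≤ t} {n | 1 ≤ n ∧ y n = (t + 1 : ℕ)} :=
      disjoint_left.mpr fun n h1 h2 => by simp only [mem_ofPred_eq] at h1 h2; omega
    have hxfin' : {n | x n = (t + 1 : ℕ)}.Finite :=
      (hfin (t + 1)).subset fun n hn => hn.le
    have hyfin' : {n | 1 ≤ n ∧ y n = (t + 1 : ℕ)}.Finite :=
      (hfin (t + 1)).subset fun n hn => (hxy n).trans hn.2.le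
    rw [hx, hy, ncard_union_eq hxdisj (hfin t) hxfin', ncard_union_eq hydisj hyfin hyfin']
    have := hcomp (t + 1)
    linarith

theorem Monotone.exists_forall_le_eq_of_infinite {x : ℕ → ℤ} (hmono : Monotone x) {t : ℤ}
    (hinf : {n | x n ≤ t}.Infinite) : ∃ κ n₀, (∀ n, x n ≤ κ) ∧ ∀ n, n₀ ≤ n → x n = κ := by
  have hbdd : ∀ n, x n ≤ t := fun n => by
    obtain ⟨n', hn', hlt⟩ := hinf.exists_gt n
    exact (hmono hlt.le).trans hn'
  obtain ⟨_, ⟨n₀, rfl⟩, hmax⟩ := Int.exists_greatest_of_bdd (P := (· ∈ range x))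
    ⟨t, by rintro _ ⟨n, rfl⟩; exact hbdd n⟩ ⟨x 0, 0, rfl⟩
  exact ⟨x n₀, n₀, fun n => hmax _ ⟨n, rfl⟩, fun n hn => le_antisymm (hmax _ ⟨n, rfl⟩) (hmono hn)⟩

theorem finite_setOf_le_of_complementary {x y : ℕ → ℤ} {m p : ℕ} (hm : 1 ≤ m) (hp : 1 ≤ p)
    (hx0 : ∀ n, 0 ≤ x n) (hmono : Monotone x) (hyx : ∀ n : ℕ, y n = x n + m * n)
    (hcomp : Complementary p x y) (t : ℤ) :
    {n | x n ≤ t}.Finite := by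
  by_contra hinf
  obtain ⟨κ, n₀, hle, heq⟩ := hmono.exists_forall_le_eq_of_infinite hinf
  have hκ : 0 ≤ κ := (hx0 n₀).trans_eq (heq n₀ le_rfl)
  -- From `κ` on, `x` contributes nothing to the counts (the fibre over `κ` is infinite), so `y`
  -- must take each of the `n₀ + 1` values `κ, …, κ + n₀`, but only `y 1, …, y n₀` can.
  have hsurj : SurjOn y (Finset.Icc 1 n₀ : Set ℕ) (Finset.Icc κ (κ + n₀) : Set ℤ) := by
    intro k hk
    rw [Finset.coe_Icc, mem_Icc] at hk
    lift k to ℕ using hκ.trans hk.1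
    have hx : {n | x n = k}.ncard = 0 := by
      rcases hk.1.eq_or_lt with h | h
      · exact Infinite.ncard ((Ici_infinite n₀).mono fun n hn => (heq n hn).trans h)
      · have hempty : {n | x n = k} = ∅ :=
          eq_empty_of_forall_notMem fun n (hn : x n = k) => by have := hle n; omega
        rw [hempty, ncard_empty]
    obtain ⟨n, hn1, hnk⟩ := nonempty_of_ncard_ne_zero (s := {n | 1 ≤ n ∧ y n = k})
      (by have := hcomp k; omega)
    refine ⟨n, ?_, hnk⟩
    rw [Finset.coe_Icc, mem_Icc]
    refine ⟨hn1, not_lt.mp fun hn => ?_⟩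
    have : (n : ℤ) ≤ m * n := le_mul_of_one_le_left (by positivity) (by exact_mod_cast hm)
    have := hyx n
    rw [heq n hn.le] at this
    omega
  have := Finset.card_le_card_of_surjOn y hsurj
  rw [Int.card_Icc, Nat.card_Icc] at this
  omega

theorem eq_of_ncard_le_add_ncard_le_eq {x x' : ℕ → ℤ} {m : ℕ} (hm : 1 ≤ m)
    (hx0 : ∀ n, 0 ≤ x n) (hx0' : ∀ n, 0 ≤ x' n) (hmono : Monotone x) (hmono' : Monotone x')
    (hfin : ∀ t : ℕ, {n | x n ≤ t}.Finite) (hfin' : ∀ t : ℕ, {n | x' n ≤ t}.Finite)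
    (h : ∀ t : ℕ, {n | x n ≤ t}.ncard + {n | 1 ≤ n ∧ x n + m * n ≤ t}.ncard
      = {n | x' n ≤ t}.ncard + {n | 1 ≤ n ∧ x' n + m * n ≤ t}.ncard) : x = x' := by
  have hsub : ∀ t : ℕ, ∀ n, x n ≤ t ↔ x' n ≤ t := by
    intro t
    induction t using Nat.strong_induction_on with
    | _ t ih =>
    have hshift : {n | 1 ≤ n ∧ x n + m * n ≤ t} = {n | 1 ≤ n ∧ x' n + m * n ≤ t} := by
      ext n
      simp only [mem_ofPred_eq, and_congr_right_iff]
      intro hn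
      have hmn : 1 ≤ m * n := Nat.one_le_iff_ne_zero.mpr (by positivity)
      rcases le_or_gt (m * n) t with hle | hlt
      · have := ih (t - m * n) (by omega) n
        omega
      · have := hx0 n
        have := hx0' n
        omega
    have hcard := h t
    rw [hshift, Nat.add_right_cancel_iff] at hcard
    have hlower : ∀ {z : ℕ → ℤ}, Monotone z → IsLowerSet {n | z n ≤ t} :=
      fun hz _ _ hba ha => (hz hba).trans ha
    exact Set.ext_iff.mp
      (Nat.isLowerSet_eq_of_ncard_eq (hfin t) (hfin' t) (hlower hmono) (hlower hmono') hcard)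
  funext n
  have h1 := hsub (x n).toNat n
  have h2 := hsub (x' n).toNat n
  have := hx0 n
  have := hx0' n
  omega

theorem Nat.not_isSquare_sq_add_four {q : ℕ} (hq : 1 ≤ q) : ¬IsSquare (q ^ 2 + 4) := by
  rintro ⟨d, hd⟩
  have hlo : q < d := by nlinarith
  have hhi : d < q + 2 := by nlinarith
  obtain rfl : d = q + 1 := by omega
  have : 2 * q = 3 := by nlinarith
  omega

section Root

variable {q : ℕ} {φ : ℝ}

theorem one_lt_of_eq_sqrt (hφ : φ = (2 - q + √((q : ℝ) ^ 2 + 4)) / 2) : 1 < φ := by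
  have hsq := Real.sq_sqrt (by positivity : (0 : ℝ) ≤ (q : ℝ) ^ 2 + 4)
  have : (q : ℝ) < √((q : ℝ) ^ 2 + 4) := by nlinarith [Real.sqrt_nonneg ((q : ℝ) ^ 2 + 4)]
  rw [hφ]
  linarith

theorem mul_add_eq_add_add_of_eq_sqrt (hφ : φ = (2 - q + √((q : ℝ) ^ 2 + 4)) / 2) :
    φ * (φ + q) = φ + (φ + q) := by
  have hsq := Real.sq_sqrt (by positivity : (0 : ℝ) ≤ (q : ℝ) ^ 2 + 4)
  rw [hφ]
  linear_combination hsq / 4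

theorem irrational_of_eq_sqrt (hq : 1 ≤ q) (hφ : φ = (2 - q + √((q : ℝ) ^ 2 + 4)) / 2) :
    Irrational φ := by
  have hsqrt : Irrational √((q : ℝ) ^ 2 + 4) := by
    exact_mod_cast irrational_sqrt_natCast_iff.mpr (Nat.not_isSquare_sq_add_four hq)
  have := ((hsqrt.intCast_add (2 - q)).div_intCast (two_ne_zero (α := ℤ)))
  rw [hφ]
  exact_mod_cast this

end Root

theorem floor_mul_add_div_eq (n m p : ℕ) (hp : p ≠ 0) (φ : ℝ) :
    ⌊(n : ℝ) * (φ + m * p) / p⌋ = ⌊(n : ℝ) * φ / p⌋ + m * n := by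
  rw [show (n : ℝ) * (φ + m * p) / p = n * φ / p + ((m * n : ℤ) : ℝ) by
    push_cast; field_simp, Int.floor_add_intCast]

theorem stmt_7_general (m p : ℕ) (hm : 1 ≤ m) (hp : 1 ≤ p)
    (φ : ℝ) (hφ : φ = (2 - (m * p : ℝ) + Real.sqrt ((m * p : ℝ)^2 + 4)) / 2)
    (x y : ℕ → ℤ)
    (hx0 : ∀ n : ℕ, 0 ≤ x n)
    (hxmono : Monotone x)
    (hcomp : ∀ k : ℕ,
      Set.ncard {n : ℕ | x n = (k : ℤ)} +
      Set.ncard {n : ℕ | 1 ≤ n ∧ y n = (k : ℤ)} = p)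
    (hdiff : ∀ n : ℕ, y n - x n = m * n) :
    ∀ n : ℕ, x n = ⌊(n : ℝ) * φ / p⌋ ∧ y n = ⌊(n : ℝ) * (φ + m * p) / p⌋ := by
  have hφq : φ = (2 - ((m * p : ℕ) : ℝ) + √(((m * p : ℕ) : ℝ) ^ 2 + 4)) / 2 := by
    push_cast; exact hφ
  have hφ0 : 0 < φ := zero_lt_one.trans (one_lt_of_eq_sqrt hφq)
  have hyx : ∀ n : ℕ, y n = x n + m * n := fun n => by linarith [hdiff n]
  have hxy : ∀ n, x n ≤ y n := fun n => by rw [hyx]; exact le_add_of_nonneg_right (by positivity)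
  set X : ℕ → ℤ := fun n => ⌊(n : ℝ) * φ / p⌋ with hX
  have hXsub : ∀ t : ℕ, {n | X n ≤ t} = Iio ⌈(t + 1) / (φ / p)⌉₊ := fun t => by
    simp only [hX, mul_div_assoc, setOf_floor_mul_le_eq_Iio (by positivity : 0 < φ / p)]
  have hXcount : ∀ t : ℕ, {n | X n ≤ t}.ncard + {n | 1 ≤ n ∧ X n + m * n ≤ t}.ncard
      = p * (t + 1) := fun t => by
    have hinv : (φ / p)⁻¹ + ((φ + m * p) / p)⁻¹ = p := by
      have hrel := mul_add_eq_add_add_of_eq_sqrt hφq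
      push_cast at hrel
      have : φ + m * p ≠ 0 := by positivity
      field_simp
      linear_combination -hrel
    have := ncard_floor_mul_le_add_ncard_floor_mul_le (by positivity) (by positivity)
      ((irrational_of_eq_sqrt (Nat.mul_le_mul hm hp) hφq).div_natCast (by omega)) hinv t
    simpa only [← mul_div_assoc, floor_mul_add_div_eq _ _ _ (by omega : p ≠ 0)] using this
  have hxfin (t : ℕ) := finite_setOf_le_of_complementary hm hp hx0 hxmono hyx hcomp t
  have hxcount : ∀ t : ℕ, {n | x n ≤ t}.ncard + {n | 1 ≤ n ∧ x n + m * n ≤ t}.ncard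
      = p * (t + 1) := fun t => by
    simpa only [hyx] using ncard_le_add_ncard_le_of_complementary hx0 hxy hxfin hcomp t
  have hxX : x = X :=
    eq_of_ncard_le_add_ncard_le_eq hm hx0 (fun n => Int.floor_nonneg.mpr (by positivity)) hxmono
      (fun a b hab => Int.floor_mono (by gcongr)) hxfin (fun t => hXsub t ▸ finite_Iio _)
      fun t => (hxcount t).trans (hXcount t).symm
  intro n
  exact ⟨congrFun hxX n, by rw [hyx, floor_mul_add_div_eq _ _ _ (by omega), hxX]⟩

theorem stmt_7 (m p : ℕ) (hm : 1 ≤ m) (hp : 1 ≤ p)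
    (φ : ℝ) (hφ : φ = (2 - (m * p : ℝ) + Real.sqrt ((m * p : ℝ)^2 + 4)) / 2)
    (x y : ℕ → ℤ)
    (hx0 : ∀ n : ℕ, 0 ≤ x n) (hy0 : ∀ n : ℕ, 0 ≤ y n)
    (hxmono : Monotone x) (hymono : Monotone y)
    (hcomp : ∀ k : ℕ,
      Set.ncard {n : ℕ | x n = (k : ℤ)} +
      Set.ncard {n : ℕ | 1 ≤ n ∧ y n = (k : ℤ)} = p)
    (hdiff : ∀ n : ℕ, y n - x n = m * n) :
    ∀ n : ℕ, x n = ⌊(n : ℝ) * φ / p⌋ ∧ y n = ⌊(n : ℝ) * (φ + m * p) / p⌋ :=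
  stmt_7_general m p hm hp φ hφ x y hx0 hxmono hcomp hdiff
end

section
/- (Fraenkel's Appendix, Theorem 1) Let p be a positive integer and α, β positive irrationals with α ≤ β and 1/α + 1/β = p. Let M = ⌊1/α⌋ + 1 and N = ⌊1/β⌋ + 1. Then the multisets S = {⌊nα⌋ : n ≥ M} and T = {⌊nβ⌋ : n ≥ N} are p-fold complementary on the positive integers: every positive integer k satisfies #{n ≥ M : ⌊nα⌋ = k} + #{n ≥ N : ⌊nβ⌋ = k} = p. -/
/-!
For `k ≥ 1` and irrational `γ > 0`, `⌊nγ⌋ = k` exactly when `k/γ < n < (k+1)/γ`, so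
there are `⌊(k+1)/γ⌋ - ⌊k/γ⌋` such `n`, all of them `> 1/γ`. Since `k/α + k/β = kp` is an integer
and `k/α` is irrational, `⌊k/α⌋ + ⌊k/β⌋ = kp - 1`; the two counts therefore add up to
`((k+1)p - 1) - (kp - 1) = p`.
-/

section FloorMul

variable {γ : ℝ} (hγ : 0 < γ) (hirr : Irrational γ)
include hγ hirr

theorem floor_natCast_mul_eq_iff {k : ℕ} (hk : k ≠ 0) (n : ℕ) :
    ⌊(n : ℝ) * γ⌋ = k ↔ (k : ℝ) / γ < n ∧ (n : ℝ) < (k + 1) / γ := by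
  rw [Int.floor_eq_iff, Int.cast_natCast, ← div_le_iff₀ hγ, ← lt_div_iff₀ hγ]
  have hne : (k : ℝ) / γ ≠ n := (hirr.natCast_div hk).ne_nat n
  exact and_congr_left' ⟨fun h ↦ h.lt_of_ne hne, le_of_lt⟩

theorem setOf_floor_natCast_mul_eq {k : ℕ} (hk : k ≠ 0) :
    {n : ℕ | ⌊(n : ℝ) * γ⌋ = k} = ↑(Finset.Ioc ⌊(k : ℝ) / γ⌋₊ ⌊((k : ℝ) + 1) / γ⌋₊) := by
  have hk1 : Irrational (((k : ℝ) + 1) / γ) := by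
    exact_mod_cast hirr.natCast_div k.succ_ne_zero
  ext n
  rw [Set.mem_ofPred_eq, floor_natCast_mul_eq_iff hγ hirr hk, Finset.coe_Ioc, Set.mem_Ioc,
    Nat.floor_lt (by positivity), Nat.le_floor_iff (by positivity)]
  exact and_congr_right' ⟨le_of_lt, fun h ↦ h.lt_of_ne (hk1.ne_nat n).symm⟩

theorem ncard_setOf_le_and_floor_natCast_mul_eq {M : ℕ} (hM : (M : ℤ) = ⌊1 / γ⌋ + 1) {k : ℕ}
    (hk : k ≠ 0) :
    Set.ncard {n : ℕ | M ≤ n ∧ ⌊(n : ℝ) * γ⌋ = k} = ⌊((k : ℝ) + 1) / γ⌋₊ - ⌊(k : ℝ) / γ⌋₊ := by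
  have hM_le : ∀ n : ℕ, ⌊(n : ℝ) * γ⌋ = k → M ≤ n := by
    intro n hn
    have hlt : 1 / γ < n := calc
      1 / γ ≤ k / γ := by gcongr; exact_mod_cast Nat.one_le_iff_ne_zero.mpr hk
      _ < n := ((floor_natCast_mul_eq_iff hγ hirr hk n).mp hn).1
    have := Int.floor_lt.mpr (show 1 / γ < ((n : ℤ) : ℝ) by exact_mod_cast hlt)
    omega
  have hset : {n : ℕ | M ≤ n ∧ ⌊(n : ℝ) * γ⌋ = k} = {n : ℕ | ⌊(n : ℝ) * γ⌋ = k} :=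
    Set.ext fun n ↦ ⟨And.right, fun hn ↦ ⟨hM_le n hn, hn⟩⟩
  rw [hset, setOf_floor_natCast_mul_eq hγ hirr hk, Set.ncard_coe_finset, Nat.card_Ioc]

end FloorMul

theorem Nat.floor_add_floor_of_add_eq_natCast {x y : ℝ} (hx : 0 ≤ x) (hy : 0 ≤ y)
    (hirr : Irrational x) {m : ℕ} (hxy : x + y = m) : ⌊x⌋₊ + ⌊y⌋₊ + 1 = m := by
  have hyirr : Irrational y := by
    rw [eq_sub_of_add_eq' hxy]; exact hirr.natCast_sub m
  have hx_lt : (⌊x⌋₊ : ℝ) < x := (Nat.floor_le hx).lt_of_ne (hirr.ne_nat _).symm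
  have hy_lt : (⌊y⌋₊ : ℝ) < y := (Nat.floor_le hy).lt_of_ne (hyirr.ne_nat _).symm
  have hx_gt := Nat.lt_floor_add_one x
  have hy_gt := Nat.lt_floor_add_one y
  have hlt : ⌊x⌋₊ + ⌊y⌋₊ < m := by
    exact_mod_cast (by push_cast; linarith : ((⌊x⌋₊ + ⌊y⌋₊ : ℕ) : ℝ) < m)
  have hgt : m < ⌊x⌋₊ + ⌊y⌋₊ + 2 := by
    exact_mod_cast (by push_cast; linarith : (m : ℝ) < ((⌊x⌋₊ + ⌊y⌋₊ + 2 : ℕ) : ℝ))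
  omega

theorem stmt_15_general (p : ℕ) (α β : ℝ) (hα : 0 < α) (hβ : 0 < β)
    (hαirr : Irrational α) (hβirr : Irrational β)
    (hsum : 1/α + 1/β = p)
    (M N : ℕ) (hM : (M : ℤ) = ⌊1/α⌋ + 1) (hN : (N : ℤ) = ⌊1/β⌋ + 1) :
    ∀ k : ℕ, 1 ≤ k →
      Set.ncard {n : ℕ | M ≤ n ∧ ⌊(n : ℝ) * α⌋ = (k : ℤ)} +
      Set.ncard {n : ℕ | N ≤ n ∧ ⌊(n : ℝ) * β⌋ = (k : ℤ)} = p := by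
  intro k hk
  have hk0 : k ≠ 0 := Nat.one_le_iff_ne_zero.mp hk
  rw [ncard_setOf_le_and_floor_natCast_mul_eq hα hαirr hM hk0,
    ncard_setOf_le_and_floor_natCast_mul_eq hβ hβirr hN hk0]
  have hfloor_k : ⌊(k : ℝ) / α⌋₊ + ⌊(k : ℝ) / β⌋₊ + 1 = k * p :=
    Nat.floor_add_floor_of_add_eq_natCast (by positivity) (by positivity)
      (hαirr.natCast_div hk0) (by push_cast; linear_combination (k : ℝ) * hsum)
  have hfloor_k1 : ⌊((k : ℝ) + 1) / α⌋₊ + ⌊((k : ℝ) + 1) / β⌋₊ + 1 = k * p + p :=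
    Nat.floor_add_floor_of_add_eq_natCast (by positivity) (by positivity)
      (by exact_mod_cast hαirr.natCast_div k.succ_ne_zero)
      (by push_cast; linear_combination ((k : ℝ) + 1) * hsum)
  have hmono_α : ⌊(k : ℝ) / α⌋₊ ≤ ⌊((k : ℝ) + 1) / α⌋₊ := Nat.floor_mono (by gcongr; linarith)
  have hmono_β : ⌊(k : ℝ) / β⌋₊ ≤ ⌊((k : ℝ) + 1) / β⌋₊ := Nat.floor_mono (by gcongr; linarith)
  omega

theorem stmt_15 (p : ℕ) (hp : 1 ≤ p) (α β : ℝ) (hα : 0 < α) (hβ : 0 < β)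
    (hαirr : Irrational α) (hβirr : Irrational β) (hle : α ≤ β)
    (hsum : 1/α + 1/β = p)
    (M N : ℕ) (hM : (M : ℤ) = ⌊1/α⌋ + 1) (hN : (N : ℤ) = ⌊1/β⌋ + 1) :
    ∀ k : ℕ, 1 ≤ k →
      Set.ncard {n : ℕ | M ≤ n ∧ ⌊(n : ℝ) * α⌋ = (k : ℤ)} +
      Set.ncard {n : ℕ | N ≤ n ∧ ⌊(n : ℝ) * β⌋ = (k : ℤ)} = p :=
  stmt_15_general p α β hα hβ hαirr hβirr hsum M N hM hN
end

section
/- (Counting step of Appendix Theorem 1) Let p ≥ 1 and let α, β be positive irrationals with 1/α + 1/β = p, M = ⌊1/α⌋ + 1, N = ⌊1/β⌋ + 1. Then for every positive integer k, #{n ≥ M : ⌊nα⌋ < k} + #{n ≥ N : ⌊nβ⌋ < k} = kp - M - N + 1. -/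
/-! The set `{n ≥ M : ⌊nγ⌋ < k}` is the interval `[M, ⌈k/γ⌉)`, of length `⌈k/γ⌉ - M`
because `M = ⌈1/γ⌉ ≤ ⌈k/γ⌉` for irrational `γ`. Since `k/α + k/β = kp` is an integer and `k/α` is
irrational, `⌈k/α⌉ + ⌈k/β⌉ = kp + 1`. -/

theorem Irrational.ceil_eq_floor_add_one {x : ℝ} (hx : Irrational x) : ⌈x⌉ = ⌊x⌋ + 1 :=
  (Int.ceil_eq_floor_add_one_iff_notMem x).2 fun ⟨m, hm⟩ => hx.ne_int m hm.symm

theorem Irrational.ceil_add_ceil_of_add_eq_intCast {x y : ℝ} {m : ℤ} (hx : Irrational x)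
    (hxy : x + y = m) : ⌈x⌉ + ⌈y⌉ = m + 1 := by
  rw [show y = -x + m by linarith, Int.ceil_add_intCast, Int.ceil_neg, hx.ceil_eq_floor_add_one]
  ring

theorem setOf_le_and_floor_mul_lt_eq_Ico {γ : ℝ} (hγ : 0 < γ) (M : ℕ) (k : ℤ) :
    {n : ℕ | M ≤ n ∧ ⌊(n : ℝ) * γ⌋ < k} = Finset.Ico M ⌈(k : ℝ) / γ⌉₊ := by
  ext n
  simp [Nat.lt_ceil, lt_div_iff₀ hγ, Int.floor_lt]

theorem ncard_setOf_le_and_floor_mul_lt {γ : ℝ} (hγ : 0 < γ) (hγirr : Irrational γ) (M : ℕ)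
    (hM : (M : ℤ) = ⌊1 / γ⌋ + 1) {k : ℕ} (hk : 1 ≤ k) :
    (Set.ncard {n : ℕ | M ≤ n ∧ ⌊(n : ℝ) * γ⌋ < (k : ℤ)} : ℤ) =
      ⌈(k : ℝ) / γ⌉ - M := by
  have hM_le : (M : ℤ) ≤ ⌈(k : ℝ) / γ⌉ := by
    have hinv : Irrational (1 / γ) := one_div γ ▸ hγirr.inv
    rw [hM, ← hinv.ceil_eq_floor_add_one]
    gcongr
    exact_mod_cast hk
  have hceil : (⌈(k : ℝ) / γ⌉₊ : ℤ) = ⌈(k : ℝ) / γ⌉ :=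
    Int.natCast_ceil_eq_ceil (by positivity)
  rw [setOf_le_and_floor_mul_lt_eq_Ico hγ, Int.cast_natCast, Set.ncard_coe_finset,
    Nat.card_Ico, Nat.cast_sub (by omega), hceil]

theorem stmt_16_general (p : ℕ) (α β : ℝ) (hα : 0 < α) (hβ : 0 < β)
    (hαirr : Irrational α) (hβirr : Irrational β)
    (hsum : 1/α + 1/β = p)
    (M N : ℕ) (hM : (M : ℤ) = ⌊1/α⌋ + 1) (hN : (N : ℤ) = ⌊1/β⌋ + 1) :
    ∀ k : ℕ, 1 ≤ k →
      (Set.ncard {n : ℕ | M ≤ n ∧ ⌊(n : ℝ) * α⌋ < (k : ℤ)} : ℤ) +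
      (Set.ncard {n : ℕ | N ≤ n ∧ ⌊(n : ℝ) * β⌋ < (k : ℤ)} : ℤ) =
      k * p - M - N + 1 := by
  intro k hk
  have hsum_k : (k : ℝ) / α + (k : ℝ) / β = ((k * p : ℤ) : ℝ) := by
    push_cast
    rw [← hsum]
    ring
  have hceil := (hαirr.natCast_div (by omega : k ≠ 0)).ceil_add_ceil_of_add_eq_intCast hsum_k
  rw [ncard_setOf_le_and_floor_mul_lt hα hαirr M hM hk,
    ncard_setOf_le_and_floor_mul_lt hβ hβirr N hN hk]
  linarith

theorem stmt_16 (p : ℕ) (hp : 1 ≤ p) (α β : ℝ) (hα : 0 < α) (hβ : 0 < β)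
    (hαirr : Irrational α) (hβirr : Irrational β)
    (hsum : 1/α + 1/β = p)
    (M N : ℕ) (hM : (M : ℤ) = ⌊1/α⌋ + 1) (hN : (N : ℤ) = ⌊1/β⌋ + 1) :
    ∀ k : ℕ, 1 ≤ k →
      (Set.ncard {n : ℕ | M ≤ n ∧ ⌊(n : ℝ) * α⌋ < (k : ℤ)} : ℤ) +
      (Set.ncard {n : ℕ | N ≤ n ∧ ⌊(n : ℝ) * β⌋ < (k : ℤ)} : ℤ) =
      k * p - M - N + 1 :=
  stmt_16_general p α β hα hβ hαirr hβirr hsum M N hM hN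
end
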